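/- arXiv:1606.05023 — 5 statements merged into one kernel-verified Lean document; each statement's English description precedes it below -/
import Mathlib

section
/- Let X be a random vector in ℝ^M whose law is absolutely continuous with density f, and suppose the event that two coordinates of X coincide has probability zero. Then the law of sort(X) is absolutely continuous with density s ↦ ∑_{π ∈ S_M} f(s ∘ π) on the ordered chamber C = {s : s₁ < s₂ < ⋯ < s_M} and 0 off C. (Paper equation for f_{S⃗}: the density of ordered arrivals is obtained by 'folding' the unordered density over all M! permutations.) -/
open MeasureTheory

/-- The nondecreasing rearrangement of a vector `x ∈ ℝ^M`. -/
noncomputable def sortVec {M : ℕ} (x : Fin M → ℝ) : Fin M → ℝ :=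
  x ∘ Tuple.sort x

/-!
If `x` has distinct coordinates, `Tuple.sort x` is the only permutation `π` making `x ∘ π`
strictly increasing, and `sort x = x ∘ π`. Hence, up to the null event of a tie,
`{sort X ∈ A}` is the disjoint union over `π` of the events `{X ∘ π ∈ A ∩ C}`, i.e. the law of
`sort X` is the restriction to `C` of the sum of the laws of the `X ∘ π`. Permuting coordinates
preserves Lebesgue measure, so `X ∘ π` has density `f (· ∘ π⁻¹)`; summing and reindexing
`π ↦ π⁻¹` gives the folded density.
-/

namespace Tuple

section Order

variable {α : Type*} [LinearOrder α] {n : ℕ} {x : Fin n → α} {σ : Equiv.Perm (Fin n)}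

theorem eq_sort_of_strictMono_comp (h : StrictMono (x ∘ σ)) : σ = sort x :=
  eq_sort_iff.mpr ⟨h.monotone, fun _ _ hij heq => absurd heq (h hij).ne⟩

theorem strictMono_comp_sort (hx : Function.Injective x) : StrictMono (x ∘ sort x) :=
  (monotone_sort x).strictMono_of_injective (hx.comp (sort x).injective)

end Order

theorem measurableSet_setOf_sort_eq {n : ℕ} (σ : Equiv.Perm (Fin n)) :
    MeasurableSet {x : Fin n → ℝ | sort x = σ} := by
  simp_rw [eq_comm (a := sort _), eq_sort_iff, Monotone]
  exact Measurable.setOf (by fun_prop)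

theorem measurable_sort {n : ℕ} : Measurable fun x : Fin n → ℝ => ⇑(sort x) :=
  measurable_to_countable fun y => by
    simpa only [Set.preimage, Set.mem_singleton_iff, DFunLike.coe_fn_eq]
      using measurableSet_setOf_sort_eq (sort y)

end Tuple

theorem measurable_sortVec {n : ℕ} : Measurable (sortVec : (Fin n → ℝ) → Fin n → ℝ) := by
  have hcomp : Measurable fun p : (Fin n → ℝ) × (Fin n → Fin n) => p.1 ∘ p.2 :=
    measurable_from_prod_countable_left fun _ => by fun_prop
  exact hcomp.comp (measurable_id.prodMk Tuple.measurable_sort)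

theorem measurableSet_setOf_strictMono {n : ℕ} :
    MeasurableSet {s : Fin n → ℝ | StrictMono s} := by
  simp_rw [StrictMono]
  exact Measurable.setOf (by fun_prop)

theorem preimage_sortVec_ae_eq_iUnion {n : ℕ} {μ : Measure (Fin n → ℝ)}
    (hinj : ∀ᵐ x ∂μ, Function.Injective x) (A : Set (Fin n → ℝ)) :
    sortVec ⁻¹' A =ᵐ[μ]
      ⋃ π : Equiv.Perm (Fin n), (fun x => x ∘ π) ⁻¹' (A ∩ {s | StrictMono s}) := by
  rw [Filter.eventuallyEq_set]
  filter_upwards [hinj] with x hx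
  simp only [Set.mem_preimage, Set.mem_iUnion, Set.mem_inter_iff, Set.mem_ofPred_eq]
  constructor
  · exact fun hA => ⟨Tuple.sort x, hA, Tuple.strictMono_comp_sort hx⟩
  · rintro ⟨π, hA, hπ⟩
    rwa [Tuple.eq_sort_of_strictMono_comp hπ] at hA

theorem map_sortVec_eq_restrict_sum_map_perm {n : ℕ} {μ : Measure (Fin n → ℝ)}
    (hinj : ∀ᵐ x ∂μ, Function.Injective x) :
    μ.map sortVec =
      (∑ π : Equiv.Perm (Fin n), μ.map (fun x => x ∘ π)).restrict {s | StrictMono s} := by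
  ext A hA
  have hdisj : Pairwise (Function.onFun Disjoint fun π : Equiv.Perm (Fin n) =>
      (fun x : Fin n → ℝ => x ∘ π) ⁻¹' (A ∩ {s | StrictMono s})) := by
    intro π ρ hne
    refine Set.disjoint_left.mpr fun x ⟨_, hπ⟩ ⟨_, hρ⟩ => hne ?_
    exact (Tuple.eq_sort_of_strictMono_comp hπ).trans (Tuple.eq_sort_of_strictMono_comp hρ).symm
  have hmeas : ∀ π : Equiv.Perm (Fin n), Measurable fun x : Fin n → ℝ => x ∘ π :=
    fun _ => by fun_prop
  rw [Measure.map_apply measurable_sortVec hA,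
    measure_congr (preimage_sortVec_ae_eq_iUnion hinj A),
    measure_iUnion hdisj fun π => hmeas π (hA.inter measurableSet_setOf_strictMono),
    tsum_fintype, Measure.restrict_apply hA, Measure.finsetSum_apply]
  exact Finset.sum_congr rfl fun π _ =>
    (Measure.map_apply (hmeas π) (hA.inter measurableSet_setOf_strictMono)).symm

theorem MeasureTheory.MeasurePreserving.map_withDensity {α β : Type*} [MeasurableSpace α]
    [MeasurableSpace β] {μ : Measure α} {ν : Measure β} {e : α ≃ᵐ β}
    (he : MeasurePreserving e μ ν) (g : α → ENNReal) :
    (μ.withDensity g).map e = ν.withDensity (g ∘ e.symm) := by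
  ext s hs
  rw [Measure.map_apply e.measurable hs, withDensity_apply _ (e.measurable hs),
    withDensity_apply _ hs, ← he.setLIntegral_comp_preimage_emb e.measurableEmbedding]
  simp only [Function.comp_apply, MeasurableEquiv.symm_apply_apply]

theorem map_comp_perm_volume_withDensity {ι α : Type*} [Fintype ι] [MeasureSpace α]
    [SigmaFinite (volume : Measure α)] (π : Equiv.Perm ι) (g : (ι → α) → ENNReal) :
    (volume.withDensity g).map (fun x => x ∘ π) = volume.withDensity fun s => g (s ∘ π.symm) :=
  -- `fun x => x ∘ π` is `MeasurableEquiv.arrowCongr' π.symm (.refl α)` by definition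
  (volume_preserving_arrowCongr' π.symm (MeasurableEquiv.refl α)
    (MeasurePreserving.id volume)).map_withDensity g

theorem withDensity_finsetSum {α ι : Type*} [MeasurableSpace α] [Fintype ι] (μ : Measure α)
    {g : ι → α → ENNReal} (hg : ∀ i, Measurable (g i)) :
    ∑ i, μ.withDensity (g i) = μ.withDensity fun a => ∑ i, g i a := by
  rw [← Measure.sum_fintype, ← withDensity_tsum hg, tsum_fintype, Finset.sum_fn]

theorem sorted_density_folding_general {M : ℕ}
    {Ω : Type*} [MeasurableSpace Ω] (P : Measure Ω)
    (X : Ω → Fin M → ℝ) (hX : Measurable X)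
    (f : (Fin M → ℝ) → ℝ) (hfmeas : Measurable f)
    (hlaw : Measure.map X P = volume.withDensity (fun x => ENNReal.ofReal (f x)))
    (hdiag : P {ω | ∃ i j, i ≠ j ∧ X ω i = X ω j} = 0) :
    Measure.map (fun ω => sortVec (X ω)) P
      = volume.withDensity (fun s =>
          if StrictMono s then ∑ π : Equiv.Perm (Fin M), ENNReal.ofReal (f (s ∘ π))
          else 0) := by
  have hinj : ∀ᵐ x ∂(P.map X), Function.Injective x := by
    have hmeas : MeasurableSet {x : Fin M → ℝ | Function.Injective x} :=
      Measurable.setOf (by unfold Function.Injective; fun_prop)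
    rw [ae_map_iff hX.aemeasurable hmeas, ae_iff]
    simpa only [Function.not_injective_iff, and_comm, ne_comm] using hdiag
  have hC := measurableSet_setOf_strictMono (n := M)
  rw [← Function.comp_def sortVec X, ← Measure.map_map measurable_sortVec hX,
    map_sortVec_eq_restrict_sum_map_perm hinj, hlaw]
  simp_rw [map_comp_perm_volume_withDensity]
  rw [withDensity_finsetSum _ fun π => by fun_prop,
    restrict_withDensity hC, ← withDensity_indicator hC]
  congr 1
  funext s
  rw [Set.indicator_apply]
  exact if_congr Iff.rfl (Fintype.sum_equiv (Equiv.inv _) _ _ fun _ => rfl) rfl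

/-- **Density of the ordered arrivals by folding.**  If `X` has density `f` on `ℝ^M` and
almost surely no two coordinates coincide, then `sort(X)` has density
`s ↦ ∑_{π} f(s ∘ π)` on the ordered chamber `C = {s : s₁ < ⋯ < s_M}` and `0` off `C`. -/
theorem sorted_density_folding {M : ℕ} (hM : 1 ≤ M)
    {Ω : Type*} [MeasurableSpace Ω] (P : Measure Ω) [IsProbabilityMeasure P]
    (X : Ω → Fin M → ℝ) (hX : Measurable X)
    (f : (Fin M → ℝ) → ℝ) (hfmeas : Measurable f) (hf0 : ∀ x, 0 ≤ f x)
    (hlaw : Measure.map X P = volume.withDensity (fun x => ENNReal.ofReal (f x)))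
    (hdiag : P {ω | ∃ i j, i ≠ j ∧ X ω i = X ω j} = 0) :
    Measure.map (fun ω => sortVec (X ω)) P
      = volume.withDensity (fun s =>
          if StrictMono s then ∑ π : Equiv.Perm (Fin M), ENNReal.ofReal (f (s ∘ π))
          else 0) :=
  sorted_density_folding_general P X hX f hfmeas hlaw hdiag
end

section
/- Let M ≥ 1, let g be a first-passage density (a probability density on ℝ with g(x) = 0 for x < 0), let t ∈ ℝ^M be launch times, and let s ∈ ℝ^M be arrival times. For each permutation π of {1,…,M} set w_π = ∏_{m=1}^M g(s_{π(m)} − t_m), and suppose W = ∑_π w_π > 0; define the probability mass function p_π = w_π / W. Let N = #{π : s_{π(m)} ≥ t_m for all m} be the number of admissible permutations. Then the Shannon entropy H(p) = −∑_π p_π log p_π satisfies H(p) ≤ log N; moreover, if g is the exponential density g(x) = μe^{−μx}·1{x ≥ 0} with μ > 0 (and N ≥ 1), then p is the uniform distribution on the set of admissible permutations and H(p) = log N. (Paper Theorem 'A General Upper Bound for H(Ω|s⃗,t)', inequality and the exponential equality case.) -/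
/-!
Causality kills the weight of every non-admissible assignment, so `p` is a probability vector
supported on the `N` admissible permutations, and Jensen's inequality for the concave function
`x ↦ -x log x` with uniform weights on that support bounds its entropy by `log N`. For the
exponential density, `∏ₘ μ e^{-μ (s_{π(m)} - t_m)} = μ^M e^{-μ (∑ s - ∑ t)}` does not depend on
the admissible `π`, so all admissible weights coincide and `p` is uniform on them.
-/

open Finset
open Real (log exp negMulLog negMulLog_zero negMulLog_eq_neg concaveOn_negMulLog log_inv exp_sum)

theorem Real.negMulLog_inv (x : ℝ) : negMulLog x⁻¹ = x⁻¹ * log x := by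
  simp [negMulLog, log_inv]

section Entropy

variable {α : Type*} [Fintype α]

theorem sum_negMulLog_le_log_card {p : α → ℝ} {A : Finset α} (hp_nonneg : ∀ a, 0 ≤ p a)
    (hp_sum : ∑ a, p a = 1) (hp_off : ∀ a ∉ A, p a = 0) :
    ∑ a, negMulLog (p a) ≤ log #A := by
  have hsum_A : ∑ a ∈ A, p a = 1 := by
    rw [← hp_sum]; exact sum_subset (subset_univ A) fun a _ ha => hp_off a ha
  have hA : (0 : ℝ) < #A := by
    have : A.Nonempty := nonempty_of_sum_ne_zero (by rw [hsum_A]; exact one_ne_zero)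
    exact_mod_cast this.card_pos
  have hjensen := concaveOn_negMulLog.le_map_sum (t := A) (w := fun _ => (#A : ℝ)⁻¹) (p := p)
    (fun _ _ => by positivity) (by simp [hA.ne']) (fun a _ => Set.mem_Ici.mpr (hp_nonneg a))
  simp only [smul_eq_mul, ← mul_sum, hsum_A, mul_one, Real.negMulLog_inv] at hjensen
  calc ∑ a, negMulLog (p a) = ∑ a ∈ A, negMulLog (p a) :=
        (sum_subset (subset_univ A) fun a _ ha => by rw [hp_off a ha, negMulLog_zero]).symm
    _ ≤ log #A := le_of_mul_le_mul_left hjensen (inv_pos.mpr hA)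

variable [DecidableEq α]

theorem sum_negMulLog_uniformOn (A : Finset α) :
    ∑ a, negMulLog (if a ∈ A then (#A : ℝ)⁻¹ else 0) = log #A := by
  rcases A.eq_empty_or_nonempty with rfl | hA
  · simp
  · have hA : (#A : ℝ) ≠ 0 := by exact_mod_cast hA.card_pos.ne'
    simp only [apply_ite negMulLog, negMulLog_zero, sum_ite_mem, univ_inter, sum_const,
      nsmul_eq_mul, Real.negMulLog_inv, mul_inv_cancel_left₀ hA]

theorem div_sum_eq_ite_of_eq_const {w : α → ℝ} {A : Finset α} {c : ℝ} (hc : c ≠ 0)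
    (hw_on : ∀ a ∈ A, w a = c) (hw_off : ∀ a ∉ A, w a = 0) (a : α) :
    w a / ∑ b, w b = if a ∈ A then (#A : ℝ)⁻¹ else 0 := by
  have hsum : ∑ b, w b = #A * c := by
    rw [← sum_subset (subset_univ A) fun b _ hb => hw_off b hb, sum_congr rfl hw_on,
      sum_const, nsmul_eq_mul]
  split_ifs with ha
  · rw [hw_on a ha, hsum]; field_simp
  · rw [hw_off a ha, zero_div]

end Entropy

section Assignment

variable {ι : Type*} [Fintype ι] {g : ℝ → ℝ} {t s : ι → ℝ} {π : Equiv.Perm ι}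

theorem prod_eq_zero_of_causal (hg_causal : ∀ x < (0 : ℝ), g x = 0)
    (hπ : ¬ ∀ m, t m ≤ s (π m)) : ∏ m, g (s (π m) - t m) = 0 := by
  push Not at hπ
  obtain ⟨m, hm⟩ := hπ
  exact prod_eq_zero (mem_univ m) (hg_causal _ (sub_neg.mpr hm))

theorem prod_exponential_eq {μ : ℝ} (hg : ∀ x, g x = if 0 ≤ x then μ * exp (-(μ * x)) else 0)
    (hπ : ∀ m, t m ≤ s (π m)) :
    ∏ m, g (s (π m) - t m) = μ ^ Fintype.card ι * exp (-(μ * (∑ m, s m - ∑ m, t m))) := by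
  have hterm : ∀ m, g (s (π m) - t m) = μ * exp (-(μ * (s (π m) - t m))) := fun m => by
    rw [hg, if_pos (sub_nonneg.mpr (hπ m))]
  rw [prod_congr rfl fun m _ => hterm m, prod_mul_distrib, prod_const, ← exp_sum, card_univ,
    sum_neg_distrib, ← mul_sum, sum_sub_distrib, Equiv.sum_comp π s]

end Assignment

theorem ordering_entropy_upper_bound_general {M : ℕ}
    (g : ℝ → ℝ) (hg0 : ∀ x, 0 ≤ g x) (hgcausal : ∀ x < (0 : ℝ), g x = 0)
    (t s : Fin M → ℝ)
    (w : Equiv.Perm (Fin M) → ℝ)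
    (hw : ∀ π : Equiv.Perm (Fin M), w π = ∏ m, g (s (π m) - t m))
    (W : ℝ) (hW : W = ∑ π : Equiv.Perm (Fin M), w π) (hWpos : 0 < W)
    (p : Equiv.Perm (Fin M) → ℝ) (hp : ∀ π, p π = w π / W)
    (N : ℕ)
    (hN : N = (Finset.univ.filter
        (fun π : Equiv.Perm (Fin M) => ∀ m, t m ≤ s (π m))).card) :
    (-(∑ π : Equiv.Perm (Fin M), p π * Real.log (p π)) ≤ Real.log (N : ℝ))
    ∧ (∀ μ : ℝ, 0 < μ →
        (∀ x : ℝ, g x = if 0 ≤ x then μ * Real.exp (-(μ * x)) else 0) →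
        1 ≤ N →
        (∀ π : Equiv.Perm (Fin M),
            p π = if (∀ m, t m ≤ s (π m)) then 1 / (N : ℝ) else 0)
        ∧ -(∑ π : Equiv.Perm (Fin M), p π * Real.log (p π)) = Real.log (N : ℝ)) := by
  set A := univ.filter fun π : Equiv.Perm (Fin M) => ∀ m, t m ≤ s (π m)
  have hw_off : ∀ π ∉ A, w π = 0 := fun π hπ => by
    rw [hw]; exact prod_eq_zero_of_causal hgcausal (by simpa [A] using hπ)
  have hp_off : ∀ π ∉ A, p π = 0 := fun π hπ => by rw [hp, hw_off π hπ, zero_div]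
  have hp_nonneg : ∀ π, 0 ≤ p π := fun π => by
    rw [hp, hw]; exact div_nonneg (prod_nonneg fun m _ => hg0 _) hWpos.le
  have hp_sum : ∑ π, p π = 1 := by simp only [hp, ← sum_div, ← hW, div_self hWpos.ne']
  have hentropy : -(∑ π, p π * log (p π)) = ∑ π, negMulLog (p π) := by
    simp [negMulLog_eq_neg]
  constructor
  · rw [hentropy, hN]
    exact sum_negMulLog_le_log_card hp_nonneg hp_sum hp_off
  intro μ hμ hexp _
  have hp_uniform : ∀ π, p π = if π ∈ A then (#A : ℝ)⁻¹ else 0 := fun π => by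
    rw [hp, hW]
    exact div_sum_eq_ite_of_eq_const (by positivity)
      (fun σ hσ => (hw σ).trans (prod_exponential_eq hexp (by simpa [A] using hσ))) hw_off π
  refine ⟨fun π => by simp [hp_uniform, hN, A], ?_⟩
  rw [hentropy, hN, ← sum_negMulLog_uniformOn A]
  exact sum_congr rfl fun π _ => congrArg negMulLog (hp_uniform π)

/-- **A general upper bound for the ordering entropy `H(Ω|s⃗,t)`.**  For a causal
first-passage density `g`, launch times `t` and arrivals `s`, the permutation
posterior `p_π = w_π / W` (with `w_π = ∏_m g(s_{π(m)} − t_m)`) has Shannon entropy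
at most `log N`, where `N` is the number of admissible permutations; if `g` is the
exponential density with rate `μ > 0` (and `N ≥ 1`), then `p` is uniform on the
admissible permutations and the entropy equals `log N`. -/
theorem ordering_entropy_upper_bound {M : ℕ} (hM : 1 ≤ M)
    (g : ℝ → ℝ) (hg0 : ∀ x, 0 ≤ g x) (hgcausal : ∀ x < (0 : ℝ), g x = 0)
    (hgdens : ∫ x, g x = 1)
    (t s : Fin M → ℝ)
    (w : Equiv.Perm (Fin M) → ℝ)
    (hw : ∀ π : Equiv.Perm (Fin M), w π = ∏ m, g (s (π m) - t m))
    (W : ℝ) (hW : W = ∑ π : Equiv.Perm (Fin M), w π) (hWpos : 0 < W)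
    (p : Equiv.Perm (Fin M) → ℝ) (hp : ∀ π, p π = w π / W)
    (N : ℕ)
    (hN : N = (Finset.univ.filter
        (fun π : Equiv.Perm (Fin M) => ∀ m, t m ≤ s (π m))).card) :
    (-(∑ π : Equiv.Perm (Fin M), p π * Real.log (p π)) ≤ Real.log (N : ℝ))
    ∧ (∀ μ : ℝ, 0 < μ →
        (∀ x : ℝ, g x = if 0 ≤ x then μ * Real.exp (-(μ * x)) else 0) →
        1 ≤ N →
        (∀ π : Equiv.Perm (Fin M),
            p π = if (∀ m, t m ≤ s (π m)) then 1 / (N : ℝ) else 0)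
        ∧ -(∑ π : Equiv.Perm (Fin M), p π * Real.log (p π)) = Real.log (N : ℝ)) :=
  ordering_entropy_upper_bound_general g hg0 hgcausal t s w hw W hW hWpos p hp N hN
end

section
/- Let M ≥ 1, let t₁ ≤ t₂ ≤ ⋯ ≤ t_M be real numbers, and let s₁,…,s_M be real numbers with s_i ≥ t₁ for every i. For m = 1,…,M−1 let η_m = #{i : s_i < t_{m+1}}. Then the number of permutations π of {1,…,M} satisfying s_{π(m)} ≥ t_m for all m equals ∏_{m=1}^{M−1} (m + 1 − η_m) (an integer-valued product; it equals 0 whenever some η_m ≥ m+1). (Paper equation |Ω|_{S,t⃗} = ∏_{m=1}^{M−1}(m+1−η_m), the enumeration of admissible permutations.) -/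
/-!
Write `A m = {i | t m ≤ s i}`; admissible permutations are exactly the injective maps with
`π m ∈ A m`, and the sets `A m` shrink as `m` grows. Fill the positions from the last one down:
the `M - 1 - m` values already placed lie in `A m`, so position `m` has `#A m - (M - 1 - m)`
choices. Each induction step removes from every `A m` a point known to lie in it, so the product
formula holds in `ℤ` with no truncated subtraction, negative factors included. Finally
`#A (m + 1) = M - η_m` and `#A 0 = M`.
-/

open Finset Function Fintype

variable {α : Type*} [DecidableEq α]

theorem card_filter_injective_piFinset_succ {n : ℕ} (A : Fin (n + 1) → Finset α) :
    #{f ∈ piFinset A | Injective f} =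
      ∑ x ∈ A (Fin.last n),
        #{g ∈ piFinset fun m : Fin n ↦ (A m.castSucc).erase x | Injective g} := by
  rw [card_eq_sum_card_fiberwise (f := fun f ↦ f (Fin.last n)) (t := A (Fin.last n))
    fun f hf ↦ (mem_piFinset.1 (mem_filter.1 hf).1) _]
  refine sum_congr rfl fun x hx ↦
    card_nbij' Fin.init (fun g : Fin n → α ↦ Fin.snoc g x) ?_ ?_ ?_ ?_
  · intro f hf
    simp only [coe_filter, mem_filter, Set.mem_ofPred_eq, mem_piFinset] at hf ⊢
    obtain ⟨⟨hA, hinj⟩, rfl⟩ := hf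
    refine ⟨fun m ↦ mem_erase.2 ⟨hinj.ne (Fin.castSucc_lt_last m).ne, hA _⟩,
      hinj.comp (Fin.castSucc_injective n)⟩
  · intro g hg
    simp only [coe_filter, mem_filter, Set.mem_ofPred_eq, mem_piFinset, mem_erase] at hg ⊢
    refine ⟨⟨fun m ↦ ?_, Fin.snoc_injective_iff.2 ⟨hg.2, fun ⟨m, hm⟩ ↦ (hg.1 m).1 hm⟩⟩,
      by simp⟩
    induction m using Fin.lastCases <;> simp [hx, (hg.1 _).2]
  · intro f hf
    simp only [coe_filter, mem_filter, Set.mem_ofPred_eq] at hf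
    simp [← hf.2]
  · intro g _
    simp

theorem card_filter_injective_piFinset_of_antitone {n : ℕ} (A : Fin n → Finset α)
    (hA : Antitone A) :
    (#{f ∈ piFinset A | Injective f} : ℤ) = ∏ m : Fin n, ((#(A m) : ℤ) - (n - 1 - m)) := by
  induction n with
  | zero => simp [Subsingleton.elim _ (default : Fin 0 → α), injective_of_subsingleton]
  | succ n ih =>
    have hA' (x : α) : Antitone fun m : Fin n ↦ (A m.castSucc).erase x :=
      fun a b hab ↦ erase_subset_erase x (hA (Fin.castSucc_le_castSucc_iff.2 hab))
    have hterm {x : α} (hx : x ∈ A (Fin.last n)) (m : Fin n) :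
        (#((A m.castSucc).erase x) : ℤ) - (n - 1 - m) = #(A m.castSucc) - (n + 1 - 1 - m) := by
      rw [cast_card_erase_of_mem (hA (Fin.le_last _) hx)]
      ring
    rw [card_filter_injective_piFinset_succ, Nat.cast_sum, Fin.prod_univ_castSucc,
      sum_congr rfl fun x hx ↦ (ih _ (hA' x)).trans (prod_congr rfl fun m _ ↦ hterm hx m)]
    simp [mul_comm]

theorem card_perm_mem_eq_card_filter_injective_piFinset [Fintype α] (A : α → Finset α) :
    #{π : Equiv.Perm α | ∀ a, π a ∈ A a} = #{f ∈ piFinset A | Injective f} := by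
  refine card_bij (fun π _ ↦ ⇑π) (fun π hπ ↦ ?_)
    (fun π _ σ _ h ↦ DFunLike.coe_injective h) fun f hf ↦ ?_
  · simp only [mem_filter, mem_univ, true_and] at hπ
    simpa [mem_piFinset] using ⟨hπ, π.injective⟩
  · simp only [mem_filter, mem_piFinset] at hf
    exact ⟨.ofBijective f (Finite.injective_iff_bijective.1 hf.2), by simpa using hf.1, rfl⟩

theorem Fin.card_filter_val_eq_card_filter_range (n : ℕ) (p : ℕ → Prop) [DecidablePred p] :
    #{i : Fin n | p i} = #{i ∈ range n | p i} := by
  simp only [card_filter]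
  exact Fin.sum_univ_eq_sum_range (fun i ↦ if p i then 1 else 0) n

/-- **Enumeration of admissible permutations** `|Ω|_{S,t⃗} = ∏_{m=1}^{M−1} (m+1−η_m)`.
Launch times are `t 0 ≤ t 1 ≤ ⋯ ≤ t (M−1)` (0-indexed) and the arrivals `s i`
(for `i < M`) all satisfy `s i ≥ t 0`.  With `η_m = #{i < M : s i < t (m+1)}`, the
number of permutations `π` with `s (π m) ≥ t m` for all `m` equals the (integer)
product `∏_{m=0}^{M−2} ((m+2) − η_m)`. -/
theorem admissible_permutation_count {M : ℕ} (hM : 1 ≤ M) (t s : ℕ → ℝ)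
    (hmono : ∀ i j : ℕ, i ≤ j → j < M → t i ≤ t j)
    (hs : ∀ i : ℕ, i < M → t 0 ≤ s i) :
    ((Finset.univ.filter (fun π : Equiv.Perm (Fin M) =>
        ∀ m : Fin M, t (m : ℕ) ≤ s ((π m : Fin M) : ℕ))).card : ℤ)
      = ∏ m ∈ Finset.range (M - 1),
          ((m : ℤ) + 2 - ((Finset.range M).filter (fun i => s i < t (m + 1))).card) := by
  obtain ⟨K, rfl⟩ : ∃ K, M = K + 1 := ⟨M - 1, by omega⟩
  set A : Fin (K + 1) → Finset (Fin (K + 1)) := fun m ↦ {i | t m ≤ s i}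
  have hA : Antitone A := fun a b hab i hi ↦ by
    simp only [A, mem_filter, mem_univ, true_and] at hi ⊢
    exact (hmono a b hab b.2).trans hi
  have hcard (m : Fin (K + 1)) : (#(A m) : ℤ) = K + 1 - #{i ∈ range (K + 1) | s i < t m} := by
    have hsplit := card_filter_add_card_filter_not (s := range (K + 1)) (fun i ↦ s i < t m)
    simp only [not_lt, card_range] at hsplit
    simp only [A, Fin.card_filter_val_eq_card_filter_range (K + 1) fun i ↦ t m ≤ s i]
    omega
  have hA0 : A 0 = univ := filter_true_of_mem fun i _ ↦ hs i i.2
  calc _ = (#{f ∈ piFinset A | Injective f} : ℤ) := by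
        rw [← card_perm_mem_eq_card_filter_injective_piFinset]
        simp [A]
    _ = ∏ m : Fin (K + 1), ((#(A m) : ℤ) - (K + 1 - 1 - m)) := by
        exact_mod_cast card_filter_injective_piFinset_of_antitone A hA
    _ = _ := by
        rw [Fin.prod_univ_succ, ← Fin.prod_univ_eq_prod_range]
        simp only [hcard, hA0, card_univ, Fintype.card_fin, Fin.val_succ, Fin.val_zero]
        push_cast
        rw [show (K + 1 - (K + 1 - 1 - 0) : ℤ) = 1 by ring, one_mul]
        exact prod_congr rfl fun m _ ↦ by ring
end

section
/- Let μ > 0 and τ > 0. Let T be a random variable taking values in [0,τ], and let D be independent of T with exponential density g(d) = μe^{−μd} for d ≥ 0. Then S = T + D has a density f_S, its differential entropy satisfies h(S) = −∫ f_S log f_S ≤ log((e + μτ)/μ), and the supremum of h(T + D) over all probability laws of T on [0,τ] equals log((e + μτ)/μ). (Paper Theorem 'Maximum h(S) for exponential first passage under a deadline constraint'.) -/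
/-!
If `ν` is the law of `T`, the law of `T + D` is `ν ∗ Exp(μ)`, whose density `f` vanishes on
`(-∞, 0)`, is bounded by `μ`, and equals `f(τ) e^{-μ (s - τ)}` on `[τ, ∞)`. Let `a = μ / (e + μτ)`
and let `q` be `a` on `[0, τ)` and `e a e^{-μ (s - τ)}` on `[τ, ∞)`. Since `log q` is affine on
`[τ, ∞)`, the cross entropy `∫ f log q` equals `log a` for every such `f`, so Gibbs' inequality
gives `h(f) ≤ -log a`. Equality holds for `q` itself, which is the density of `T + D` when
`T` has law `(a/μ) δ₀ + a · Leb|[0,τ] + ((e - 1) a/μ) δ_τ`.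
-/

open MeasureTheory

/-- The exponential law with rate `μ`, as a measure on `ℝ`. -/
noncomputable def expLaw (μ : ℝ) : Measure ℝ :=
  volume.withDensity (fun x => ENNReal.ofReal (if 0 ≤ x then μ * Real.exp (-(μ * x)) else 0))

open ProbabilityTheory Real Set Filter Topology
open scoped ENNReal

theorem conv_withDensity_eq (ν : Measure ℝ) [SFinite ν] {g : ℝ → ℝ≥0∞} (hg : Measurable g) :
    ν ∗ volume.withDensity g = volume.withDensity (fun s => ∫⁻ t, g (s - t) ∂ν) := by
  refine Measure.ext_of_lintegral _ fun φ hφ => ?_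
  calc ∫⁻ s, φ s ∂(ν ∗ volume.withDensity g)
      = ∫⁻ t, (∫⁻ s, g (s - t) * φ s) ∂ν := by
        rw [Measure.lintegral_conv hφ]
        refine lintegral_congr fun t => ?_
        rw [lintegral_withDensity_eq_lintegral_mul _ hg (by fun_prop),
          ← lintegral_sub_right_eq_self _ t]
        simp
    _ = ∫⁻ s, (∫⁻ t, g (s - t) ∂ν) * φ s := by
        rw [lintegral_lintegral_swap (by fun_prop)]
        exact lintegral_congr fun s => lintegral_mul_const _ (by fun_prop)
    _ = _ := (lintegral_withDensity_eq_lintegral_mul _ (by fun_prop) hφ).symm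

theorem integrable_and_integral_eq_one_of_withDensity {α : Type*} [MeasurableSpace α]
    {m : Measure α} {f : α → ℝ} (hf : AEStronglyMeasurable f m) (hf0 : 0 ≤ᵐ[m] f)
    [IsProbabilityMeasure (m.withDensity fun x => ENNReal.ofReal (f x))] :
    Integrable f m ∧ ∫ x, f x ∂m = 1 := by
  have hmass : ∫⁻ x, ENNReal.ofReal (f x) ∂m = 1 := by
    rw [← setLIntegral_univ, ← withDensity_apply _ MeasurableSet.univ, measure_univ]
  refine ⟨⟨hf, (hasFiniteIntegral_iff_ofReal hf0).2 (hmass ▸ ENNReal.one_lt_top)⟩, ?_⟩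
  rw [integral_eq_lintegral_of_nonneg_ae hf0 hf, hmass, ENNReal.toReal_one]

theorem sub_le_mul_log_sub_mul_log {x y : ℝ} (hx : 0 ≤ x) (hy : 0 < y) :
    x - y ≤ x * log x - x * log y := by
  rcases hx.eq_or_lt with rfl | hx
  · simp [hy.le]
  have h := mul_le_mul_of_nonneg_left (self_sub_one_le_mul_log (div_nonneg hx.le hy.le)) hy.le
  rw [log_div hx.ne' hy.ne'] at h
  have hlhs : y * (x / y - 1) = x - y := by field_simp
  have hrhs : y * (x / y * (log x - log y)) = x * log x - x * log y := by field_simp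
  linarith

namespace ProbabilityTheory

lemma exponentialPDFReal_eq (r x : ℝ) :
    exponentialPDFReal r x = if 0 ≤ x then r * exp (-(r * x)) else 0 := by
  simp [exponentialPDFReal, gammaPDFReal]

lemma exponentialPDFReal_le {r : ℝ} (hr : 0 ≤ r) (x : ℝ) : exponentialPDFReal r x ≤ r := by
  rw [exponentialPDFReal_eq]
  split_ifs with hx
  · exact mul_le_of_le_one_right hr (exp_le_one_iff.2 (by nlinarith))
  · exact hr

end ProbabilityTheory

lemma expLaw_eq_expMeasure (μ : ℝ) : expLaw μ = expMeasure μ := by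
  simp only [expLaw, expMeasure, gammaMeasure, ← exponentialPDFReal_eq]
  rfl

noncomputable def expConvDensity (μ : ℝ) (ν : Measure ℝ) (s : ℝ) : ℝ :=
  ∫ t, exponentialPDFReal μ (s - t) ∂ν

section ExpConvDensity

variable {μ : ℝ} (ν : Measure ℝ)

lemma measurable_expConvDensity [SFinite ν] : Measurable (expConvDensity μ ν) :=
  (((measurable_exponentialPDFReal μ).comp (measurable_fst.sub measurable_snd)).stronglyMeasurable
    |>.integral_prod_right').measurable

lemma expConvDensity_nonneg (hμ : 0 < μ) (s : ℝ) : 0 ≤ expConvDensity μ ν s :=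
  integral_nonneg fun _ => exponentialPDFReal_nonneg hμ _

lemma integrable_exponentialPDFReal_sub (hμ : 0 < μ) [IsFiniteMeasure ν] (s : ℝ) :
    Integrable (fun t => exponentialPDFReal μ (s - t)) ν :=
  .of_bound ((measurable_exponentialPDFReal μ).comp
    (measurable_const.sub measurable_id)).aestronglyMeasurable μ <| ae_of_all _ fun t => by
    rw [norm_of_nonneg (exponentialPDFReal_nonneg hμ _)]
    exact exponentialPDFReal_le hμ.le _

lemma expConvDensity_le (hμ : 0 < μ) [IsProbabilityMeasure ν] (s : ℝ) :
    expConvDensity μ ν s ≤ μ := by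
  simpa [expConvDensity] using integral_mono (integrable_exponentialPDFReal_sub ν hμ s)
    (integrable_const μ) fun t => exponentialPDFReal_le hμ.le (s - t)

theorem conv_expMeasure (hμ : 0 < μ) [IsFiniteMeasure ν] :
    ν ∗ expMeasure μ = volume.withDensity fun s => ENNReal.ofReal (expConvDensity μ ν s) := by
  rw [show expMeasure μ = volume.withDensity (exponentialPDF μ) from rfl,
    conv_withDensity_eq ν (g := exponentialPDF μ) (measurable_exponentialPDFReal μ).ennreal_ofReal]
  congr 1 with s
  exact (ofReal_integral_eq_lintegral_ofReal (integrable_exponentialPDFReal_sub ν hμ s)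
    (ae_of_all _ fun t => exponentialPDFReal_nonneg hμ _)).symm

lemma conv_expLaw (hμ : 0 < μ) [IsFiniteMeasure ν] :
    ν ∗ expLaw μ = volume.withDensity fun s => ENNReal.ofReal (expConvDensity μ ν s) := by
  rw [expLaw_eq_expMeasure, conv_expMeasure ν hμ]

lemma integrable_and_integral_expConvDensity (hμ : 0 < μ) [IsProbabilityMeasure ν] :
    Integrable (expConvDensity μ ν) ∧ ∫ s, expConvDensity μ ν s = 1 := by
  have := isProbabilityMeasure_expMeasure hμ
  have : IsProbabilityMeasure
      (volume.withDensity fun s => ENNReal.ofReal (expConvDensity μ ν s)) := by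
    rw [← conv_expMeasure ν hμ]; infer_instance
  exact integrable_and_integral_eq_one_of_withDensity
    (measurable_expConvDensity ν).aestronglyMeasurable
    (ae_of_all _ (expConvDensity_nonneg ν hμ))

variable {ν}

lemma expConvDensity_of_neg (hν : ∀ᵐ t ∂ν, 0 ≤ t) {s : ℝ} (hs : s < 0) :
    expConvDensity μ ν s = 0 := by
  refine integral_eq_zero_of_ae (hν.mono fun t ht => ?_)
  change exponentialPDFReal μ (s - t) = 0
  rw [exponentialPDFReal_eq, if_neg (by linarith)]

lemma expConvDensity_of_le {τ : ℝ} (hν : ∀ᵐ t ∂ν, t ≤ τ) {s : ℝ} (hs : τ ≤ s) :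
    expConvDensity μ ν s = expConvDensity μ ν τ * exp (-(μ * (s - τ))) := by
  rw [expConvDensity, expConvDensity, ← integral_mul_const]
  refine integral_congr_ae (hν.mono fun t ht => ?_)
  simp only [exponentialPDFReal_eq, if_pos (sub_nonneg.2 (ht.trans hs)),
    if_pos (sub_nonneg.2 ht), mul_assoc, ← exp_add]
  ring_nf

end ExpConvDensity

section ExpTail

variable {μ : ℝ}

lemma tendsto_exp_neg_mul_sub (hμ : 0 < μ) (τ : ℝ) :
    Tendsto (fun s => exp (-(μ * (s - τ)))) atTop (𝓝 0) :=
  tendsto_exp_atBot.comp <| tendsto_neg_atTop_atBot.comp <|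
    (tendsto_atTop_add_const_right _ (-τ) tendsto_id).const_mul_atTop hμ

lemma tendsto_sub_mul_exp_neg_mul_sub (hμ : 0 < μ) (τ : ℝ) :
    Tendsto (fun s => (s - τ) * exp (-(μ * (s - τ)))) atTop (𝓝 0) := by
  simpa [Function.comp_def, sub_eq_add_neg] using
    (tendsto_rpow_mul_exp_neg_mul_atTop_nhds_zero 1 μ hμ).comp
      (tendsto_atTop_add_const_right _ (-τ) tendsto_id)

theorem integrableOn_and_integral_Ioi_affine_mul_exp (hμ : 0 < μ) (τ A B : ℝ) :
    IntegrableOn (fun s => (A + B * (s - τ)) * exp (-(μ * (s - τ)))) (Ioi τ) ∧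
      ∫ s in Ioi τ, (A + B * (s - τ)) * exp (-(μ * (s - τ))) = A / μ + B / μ ^ 2 := by
  have hE : ∀ s, HasDerivAt (fun s => exp (-(μ * (s - τ)))) (-μ * exp (-(μ * (s - τ)))) s :=
    fun s => (((hasDerivAt_id s).sub_const τ).const_mul μ).neg.exp.congr_deriv (by simp; ring)
  have hE0 : ∀ s ∈ Ici τ, HasDerivAt (fun s => -exp (-(μ * (s - τ))) / μ)
      (exp (-(μ * (s - τ)))) s := fun s _ =>
    (hE s).neg.div_const μ |>.congr_deriv (by field_simp)
  have hE1 : ∀ s ∈ Ici τ, HasDerivAt (fun s => -((s - τ) / μ + 1 / μ ^ 2) * exp (-(μ * (s - τ))))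
      ((s - τ) * exp (-(μ * (s - τ)))) s := fun s _ => by
    refine ((((hasDerivAt_id s).sub_const τ).div_const μ).add_const (1 / μ ^ 2)).neg.mul (hE s)
      |>.congr_deriv ?_
    simp only [Pi.neg_apply, id_eq]
    field_simp
    ring
  have hpos0 : ∀ s ∈ Ioi τ, 0 ≤ exp (-(μ * (s - τ))) := fun s _ => (exp_pos _).le
  have hpos1 : ∀ s ∈ Ioi τ, 0 ≤ (s - τ) * exp (-(μ * (s - τ))) := fun s hs =>
    mul_nonneg (sub_nonneg.2 (le_of_lt hs)) (exp_pos _).le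
  have hlim0 : Tendsto (fun s => -exp (-(μ * (s - τ))) / μ) atTop (𝓝 0) := by
    simpa using ((tendsto_exp_neg_mul_sub hμ τ).neg).div_const μ
  have hlim1 :
      Tendsto (fun s => -((s - τ) / μ + 1 / μ ^ 2) * exp (-(μ * (s - τ)))) atTop (𝓝 0) := by
    have := ((tendsto_sub_mul_exp_neg_mul_sub hμ τ).div_const μ).add
      ((tendsto_exp_neg_mul_sub hμ τ).const_mul (1 / μ ^ 2))
    simpa [neg_mul, add_mul, div_mul_eq_mul_div, mul_comm] using this.neg
  have hint0 := integrableOn_Ioi_deriv_of_nonneg' hE0 hpos0 hlim0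
  have hint1 := integrableOn_Ioi_deriv_of_nonneg' hE1 hpos1 hlim1
  have hsplit : (fun s => (A + B * (s - τ)) * exp (-(μ * (s - τ))))
      = fun s => A * exp (-(μ * (s - τ))) + B * ((s - τ) * exp (-(μ * (s - τ)))) := by
    ext s; ring
  rw [hsplit]
  refine ⟨(hint0.const_mul A).add (hint1.const_mul B), ?_⟩
  rw [integral_add (hint0.const_mul A) (hint1.const_mul B), integral_const_mul, integral_const_mul,
    integral_Ioi_of_hasDerivAt_of_nonneg' hE0 hpos0 hlim0,
    integral_Ioi_of_hasDerivAt_of_nonneg' hE1 hpos1 hlim1]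
  simp only [sub_self, mul_zero, neg_zero, exp_zero, zero_div, zero_add]
  field_simp
  ring

theorem integrable_and_integral_eq_of_affine_mul_exp_tail {τ : ℝ} (hμ : 0 < μ) (hτ : 0 ≤ τ)
    {F : ℝ → ℝ} {A B : ℝ} (hneg : ∀ s < 0, F s = 0) (hhead : IntegrableOn F (Ico 0 τ))
    (htail : ∀ s, τ ≤ s → F s = (A + B * (s - τ)) * exp (-(μ * (s - τ)))) :
    Integrable F ∧ ∫ s, F s = (∫ s in Ico 0 τ, F s) + (A / μ + B / μ ^ 2) := by
  obtain ⟨hint, hval⟩ := integrableOn_and_integral_Ioi_affine_mul_exp hμ τ A B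
  have htail' : IntegrableOn F (Ici τ) :=
    ((integrableOn_Ici_iff_integrableOn_Ioi).2 hint).congr_fun (fun s hs => (htail s hs).symm)
      measurableSet_Ici
  have hsupp : ∀ s ∉ Ico 0 τ ∪ Ici τ, F s = 0 := fun s hs => by
    rw [Ico_union_Ici_eq_Ici hτ, mem_Ici, not_le] at hs
    exact hneg s hs
  refine ⟨(integrableOn_iff_integrable_of_support_subset
    (Function.support_subset_iff'.2 hsupp)).1 (hhead.union htail'), ?_⟩
  rw [← setIntegral_eq_integral_of_forall_compl_eq_zero (μ := volume) hsupp,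
    setIntegral_union (s := Ico 0 τ) (t := Ici τ)
      (disjoint_left.2 fun s hs hs' => not_le.2 hs.2 hs') measurableSet_Ici hhead htail',
    setIntegral_congr_fun measurableSet_Ici htail, integral_Ici_eq_integral_Ioi, hval]

lemma setIntegral_Icc_exponentialPDFReal_sub {τ : ℝ} (hτ : 0 ≤ τ) {s : ℝ} (hs : 0 ≤ s) :
    ∫ t in Icc 0 τ, exponentialPDFReal μ (s - t)
      = exp (-(μ * (s - min s τ))) - exp (-(μ * s)) := by
  have hvanish : ∀ t ∈ Icc 0 τ \ Icc 0 (min s τ), exponentialPDFReal μ (s - t) = 0 := by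
    rintro t ⟨⟨ht0, htτ⟩, ht⟩
    have hst : s < t := by
      by_contra! h
      exact ht ⟨ht0, le_min h htτ⟩
    rw [exponentialPDFReal_eq, if_neg (by linarith)]
  have hexp : EqOn (fun t => exponentialPDFReal μ (s - t)) (fun t => μ * exp (-(μ * (s - t))))
      (Icc 0 (min s τ)) := fun t ht => by
    dsimp only
    rw [exponentialPDFReal_eq, if_pos (by linarith [ht.2, min_le_left s τ])]
  have hderiv : ∀ t, HasDerivAt (fun t => exp (-(μ * (s - t)))) (μ * exp (-(μ * (s - t)))) t :=
    fun t => (((hasDerivAt_id t).const_sub s).const_mul μ).neg.exp.congr_deriv (by simp; ring)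
  rw [setIntegral_eq_of_subset_of_forall_sdiff_eq_zero measurableSet_Icc
      (Icc_subset_Icc_right (min_le_right s τ)) hvanish,
    setIntegral_congr_fun measurableSet_Icc hexp, integral_Icc_eq_integral_Ioc,
    ← intervalIntegral.integral_of_le (le_min hs hτ),
    intervalIntegral.integral_eq_sub_of_hasDerivAt (fun t _ => hderiv t)
      (by apply Continuous.intervalIntegrable; fun_prop)]
  simp

end ExpTail

noncomputable def maxEntPlateau (μ τ : ℝ) : ℝ := μ / (exp 1 + μ * τ)

noncomputable def maxEntDensity (μ τ s : ℝ) : ℝ :=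
  if s < 0 then 0 else if s < τ then maxEntPlateau μ τ
  else exp 1 * maxEntPlateau μ τ * exp (-(μ * (s - τ)))

/-- A density `f = ν ∗ (exponential density)` solves `f' + μ f = μ ν`; for `f = maxEntDensity μ τ`
the jumps of `f` at `0` and at `τ` become atoms of `ν`. -/
noncomputable def maxEntLaw (μ τ : ℝ) : Measure ℝ :=
  ENNReal.ofReal (maxEntPlateau μ τ / μ) • Measure.dirac 0
  + ENNReal.ofReal (maxEntPlateau μ τ) • volume.restrict (Icc 0 τ)
  + ENNReal.ofReal ((exp 1 - 1) * maxEntPlateau μ τ / μ) • Measure.dirac τ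

section MaxEnt

variable {μ τ : ℝ}

lemma maxEntPlateau_pos (hμ : 0 < μ) (hτ : 0 ≤ τ) : 0 < maxEntPlateau μ τ :=
  div_pos hμ (by positivity)

lemma maxEntDensity_of_neg {s : ℝ} (hs : s < 0) : maxEntDensity μ τ s = 0 := if_pos hs

lemma maxEntDensity_of_mem_Ico {s : ℝ} (hs : s ∈ Ico 0 τ) :
    maxEntDensity μ τ s = maxEntPlateau μ τ := by
  rw [maxEntDensity, if_neg (not_lt.2 hs.1), if_pos hs.2]

lemma maxEntDensity_of_le {s : ℝ} (hτ : 0 ≤ τ) (hs : τ ≤ s) :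
    maxEntDensity μ τ s = exp 1 * maxEntPlateau μ τ * exp (-(μ * (s - τ))) := by
  rw [maxEntDensity, if_neg (by linarith), if_neg (not_lt.2 hs)]

lemma maxEntDensity_pos (hμ : 0 < μ) (hτ : 0 ≤ τ) {s : ℝ} (hs : 0 ≤ s) :
    0 < maxEntDensity μ τ s := by
  have := maxEntPlateau_pos hμ hτ
  rcases lt_or_ge s τ with hsτ | hsτ
  · rwa [maxEntDensity_of_mem_Ico ⟨hs, hsτ⟩]
  · rw [maxEntDensity_of_le hτ hsτ]
    positivity

lemma exp_one_sub_one_nonneg : 0 ≤ exp 1 - 1 := by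
  linarith [add_one_le_exp 1]

lemma isProbabilityMeasure_maxEntLaw (hμ : 0 < μ) (hτ : 0 ≤ τ) :
    IsProbabilityMeasure (maxEntLaw μ τ) := by
  constructor
  have ha := maxEntPlateau_pos hμ hτ
  have he := exp_one_sub_one_nonneg
  simp only [maxEntLaw, Measure.add_apply, Measure.smul_apply, measure_univ,
    Measure.restrict_apply MeasurableSet.univ, univ_inter, volume_Icc, sub_zero, smul_eq_mul,
    mul_one]
  rw [← ENNReal.ofReal_mul ha.le, ← ENNReal.ofReal_add (by positivity) (by positivity),
    ← ENNReal.ofReal_add (by positivity) (by positivity), ← ENNReal.ofReal_one]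
  congr 1
  rw [maxEntPlateau]
  field_simp
  ring

lemma ae_mem_Icc_maxEntLaw (hτ : 0 ≤ τ) : ∀ᵐ t ∂maxEntLaw μ τ, t ∈ Icc 0 τ := by
  simp only [maxEntLaw, ae_add_measure_iff]
  exact ⟨⟨Measure.ae_smul_measure ((ae_dirac_iff measurableSet_Icc).2 ⟨le_rfl, hτ⟩) _,
    Measure.ae_smul_measure (ae_restrict_mem measurableSet_Icc) _⟩,
    Measure.ae_smul_measure ((ae_dirac_iff measurableSet_Icc).2 ⟨hτ, le_rfl⟩) _⟩

lemma integral_maxEntLaw {H : ℝ → ℝ} (hμ : 0 < μ) (hτ : 0 ≤ τ)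
    (hH : Integrable H (maxEntLaw μ τ)) :
    ∫ t, H t ∂maxEntLaw μ τ = maxEntPlateau μ τ / μ * H 0
      + maxEntPlateau μ τ * (∫ t in Icc 0 τ, H t)
      + (exp 1 - 1) * maxEntPlateau μ τ / μ * H τ := by
  have ha := maxEntPlateau_pos hμ hτ
  have he := exp_one_sub_one_nonneg
  rw [maxEntLaw] at hH ⊢
  rw [integral_add_measure hH.left_of_add_measure hH.right_of_add_measure,
    integral_add_measure hH.left_of_add_measure.left_of_add_measure
      hH.left_of_add_measure.right_of_add_measure,
    integral_smul_measure, integral_smul_measure, integral_smul_measure, integral_dirac,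
    integral_dirac, ENNReal.toReal_ofReal (by positivity), ENNReal.toReal_ofReal ha.le,
    ENNReal.toReal_ofReal (by positivity)]
  simp only [smul_eq_mul]

theorem expConvDensity_maxEntLaw (hμ : 0 < μ) (hτ : 0 ≤ τ) :
    expConvDensity μ (maxEntLaw μ τ) = maxEntDensity μ τ := by
  have := isProbabilityMeasure_maxEntLaw hμ hτ
  ext s
  rcases lt_or_ge s 0 with hs | hs
  · rw [expConvDensity_of_neg ((ae_mem_Icc_maxEntLaw hτ).mono fun t ht => ht.1) hs,
      maxEntDensity_of_neg hs]
  rw [expConvDensity, integral_maxEntLaw hμ hτ (integrable_exponentialPDFReal_sub _ hμ s),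
    setIntegral_Icc_exponentialPDFReal_sub hτ hs, sub_zero, exponentialPDFReal_eq,
    exponentialPDFReal_eq, if_pos hs]
  rcases lt_or_ge s τ with hsτ | hsτ
  · rw [maxEntDensity_of_mem_Ico ⟨hs, hsτ⟩, min_eq_left hsτ.le, if_neg (by linarith), sub_self,
      mul_zero, neg_zero, exp_zero]
    field_simp
    ring
  · rw [maxEntDensity_of_le hτ hsτ, min_eq_right hsτ, if_pos (sub_nonneg.2 hsτ)]
    field_simp
    ring

end MaxEnt

section Entropy

variable {μ τ : ℝ}

lemma integrable_and_integral_maxEntDensity (hμ : 0 < μ) (hτ : 0 ≤ τ) :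
    Integrable (maxEntDensity μ τ) ∧ ∫ s, maxEntDensity μ τ s = 1 := by
  have := isProbabilityMeasure_maxEntLaw hμ hτ
  rw [← expConvDensity_maxEntLaw hμ hτ]
  exact integrable_and_integral_expConvDensity _ hμ

/-- On `[τ, ∞)`, `log (maxEntDensity μ τ s) = log (maxEntPlateau μ τ) + 1 - μ (s - τ)`, and
`∫₀^∞ (1 - μ u) e^{-μ u} du = 0`, so the value does not depend on `c`. -/
theorem integrable_and_integral_mul_log_maxEntDensity (hμ : 0 < μ) (hτ : 0 ≤ τ) {f : ℝ → ℝ}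
    {c : ℝ} (hf : Integrable f) (hf1 : ∫ s, f s = 1) (hneg : ∀ s < 0, f s = 0)
    (htail : ∀ s, τ ≤ s → f s = c * exp (-(μ * (s - τ)))) :
    Integrable (fun s => f s * log (maxEntDensity μ τ s)) ∧
      ∫ s, f s * log (maxEntDensity μ τ s) = log (maxEntPlateau μ τ) := by
  set a := maxEntPlateau μ τ
  have ha : 0 < a := maxEntPlateau_pos hμ hτ
  obtain ⟨-, hmass⟩ := integrable_and_integral_eq_of_affine_mul_exp_tail hμ hτ (A := c) (B := 0)
    hneg hf.integrableOn fun s hs => by rw [htail s hs]; ring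
  have hhead : EqOn (fun s => f s * log (maxEntDensity μ τ s)) (fun s => log a * f s) (Ico 0 τ) :=
    fun s hs => by simp only [maxEntDensity_of_mem_Ico hs, a]; ring
  obtain ⟨hint, hval⟩ := integrable_and_integral_eq_of_affine_mul_exp_tail hμ hτ
    (F := fun s => f s * log (maxEntDensity μ τ s)) (A := c * (1 + log a)) (B := -(c * μ))
    (fun s hs => by simp [hneg s hs])
    (IntegrableOn.congr_fun (hf.integrableOn.const_mul (log a)) hhead.symm measurableSet_Ico)
    fun s hs => by
      rw [htail s hs, maxEntDensity_of_le hτ hs, log_mul (by positivity) (exp_pos _).ne',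
        log_mul (exp_pos 1).ne' ha.ne', log_exp, log_exp]
      ring
  refine ⟨hint, ?_⟩
  have hhead_mass : ∫ s in Ico 0 τ, f s = 1 - c / μ := by
    rw [hf1] at hmass
    linarith [zero_div (μ ^ 2)]
  rw [hval, setIntegral_congr_fun measurableSet_Ico hhead, integral_const_mul, hhead_mass]
  field_simp
  ring

lemma integrable_mul_log_of_exp_tail (hμ : 0 < μ) (hτ : 0 ≤ τ) {f : ℝ → ℝ} {c M : ℝ}
    (hf : AEStronglyMeasurable f) (hf0 : ∀ s, 0 ≤ f s) (hfM : ∀ s, f s ≤ M)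
    (hneg : ∀ s < 0, f s = 0) (htail : ∀ s, τ ≤ s → f s = c * exp (-(μ * (s - τ)))) :
    Integrable fun s => f s * log (f s) := by
  obtain ⟨C, hC⟩ := isCompact_Icc.exists_bound_of_continuousOn
    (continuous_mul_log.continuousOn (s := Icc 0 M))
  refine (integrable_and_integral_eq_of_affine_mul_exp_tail hμ hτ (A := c * log c) (B := -(c * μ))
    (fun s hs => by simp [hneg s hs])
    (Measure.integrableOn_of_bounded (M := C) measure_Ico_lt_top.ne
      (continuous_mul_log.comp_aestronglyMeasurable hf)
      (ae_of_all _ fun s => hC _ ⟨hf0 s, hfM s⟩))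
    fun s hs => ?_).1
  rw [htail s hs]
  rcases eq_or_ne c 0 with rfl | hc
  · simp
  rw [log_mul hc (exp_pos _).ne', log_exp]
  ring

theorem log_maxEntPlateau_le_integral_mul_log (hμ : 0 < μ) (hτ : 0 ≤ τ) {f : ℝ → ℝ} {c M : ℝ}
    (hf : Integrable f) (hf1 : ∫ s, f s = 1) (hf0 : ∀ s, 0 ≤ f s) (hfM : ∀ s, f s ≤ M)
    (hneg : ∀ s < 0, f s = 0) (htail : ∀ s, τ ≤ s → f s = c * exp (-(μ * (s - τ)))) :
    log (maxEntPlateau μ τ) ≤ ∫ s, f s * log (f s) := by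
  obtain ⟨hq, hq1⟩ := integrable_and_integral_maxEntDensity hμ hτ
  obtain ⟨hcross, hcross_val⟩ :=
    integrable_and_integral_mul_log_maxEntDensity hμ hτ hf hf1 hneg htail
  have hent := integrable_mul_log_of_exp_tail hμ hτ hf.1 hf0 hfM hneg htail
  have hgibbs : ∀ s, f s - maxEntDensity μ τ s ≤
      f s * log (f s) - f s * log (maxEntDensity μ τ s) := fun s => by
    rcases lt_or_ge s 0 with hs | hs
    · simp [hneg s hs, maxEntDensity_of_neg hs]
    · exact sub_le_mul_log_sub_mul_log (hf0 s) (maxEntDensity_pos hμ hτ hs)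
  have : ∫ s, (f s - maxEntDensity μ τ s) ≤
      ∫ s, (f s * log (f s) - f s * log (maxEntDensity μ τ s)) :=
    integral_mono (hf.sub hq) (hent.sub hcross) hgibbs
  rw [integral_sub hf hq, integral_sub hent hcross, hf1, hq1, hcross_val] at this
  linarith

lemma neg_log_maxEntPlateau : -log (maxEntPlateau μ τ) = log ((exp 1 + μ * τ) / μ) := by
  rw [maxEntPlateau, ← log_inv, inv_div]

theorem neg_integral_mul_log_le_of_conv_expLaw (hμ : 0 < μ) (hτ : 0 ≤ τ) (ν : Measure ℝ)
    [IsProbabilityMeasure ν] (hν : ∀ᵐ t ∂ν, t ∈ Icc 0 τ) {f : ℝ → ℝ} (hfm : Measurable f)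
    (hf0 : ∀ x, 0 ≤ f x)
    (hlaw : ν ∗ expLaw μ = volume.withDensity fun x => ENNReal.ofReal (f x)) :
    -(∫ x, f x * log (f x)) ≤ log ((exp 1 + μ * τ) / μ) := by
  rw [conv_expLaw ν hμ, withDensity_eq_iff_of_sigmaFinite
    (measurable_expConvDensity ν).ennreal_ofReal.aemeasurable hfm.ennreal_ofReal.aemeasurable]
    at hlaw
  have hae : ∀ᵐ x, expConvDensity μ ν x * log (expConvDensity μ ν x) = f x * log (f x) :=
    hlaw.mono fun x hx => by
      rw [(ENNReal.ofReal_eq_ofReal_iff (expConvDensity_nonneg ν hμ x) (hf0 x)).1 hx]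
  obtain ⟨hint, hmass⟩ := integrable_and_integral_expConvDensity ν hμ
  have := log_maxEntPlateau_le_integral_mul_log hμ hτ hint hmass (expConvDensity_nonneg ν hμ)
    (expConvDensity_le ν hμ) (fun s hs => expConvDensity_of_neg (hν.mono fun t ht => ht.1) hs)
    fun s hs => expConvDensity_of_le (hν.mono fun t ht => ht.2) hs
  rw [integral_congr_ae hae] at this
  rw [← neg_log_maxEntPlateau]
  linarith

end Entropy

/-- **Maximum `h(S)` for exponential first passage under a deadline constraint.**
If `T ∈ [0,τ]` and `D` is an independent exponential(μ) first-passage time, then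
`S = T + D` has a density `f_S` whose differential entropy satisfies
`h(S) = −∫ f_S log f_S ≤ log((e + μτ)/μ)`, and the supremum of `h(T+D)` over all
probability laws of `T` on `[0,τ]` equals `log((e + μτ)/μ)`. -/
theorem max_entropy_exponential_deadline
    (μ τ : ℝ) (hμ : 0 < μ) (hτ : 0 < τ)
    {Ω : Type} [MeasurableSpace Ω] (P : Measure Ω) [IsProbabilityMeasure P]
    (T D : Ω → ℝ) (hT : Measurable T) (hD : Measurable D)
    (hTsupp : ∀ ω, T ω ∈ Set.Icc 0 τ)
    (hindep : ProbabilityTheory.IndepFun T D P)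
    (hDlaw : Measure.map D P = expLaw μ) :
    (∃ f : ℝ → ℝ, Measurable f ∧ (∀ x, 0 ≤ f x) ∧
        Measure.map (fun ω => T ω + D ω) P
          = volume.withDensity (fun x => ENNReal.ofReal (f x)) ∧
        -(∫ x, f x * Real.log (f x)) ≤ Real.log ((Real.exp 1 + μ * τ) / μ))
    ∧ sSup { h : ℝ | ∃ ν : Measure ℝ, IsProbabilityMeasure ν ∧ ν (Set.Icc 0 τ)ᶜ = 0 ∧
          ∃ f : ℝ → ℝ, Measurable f ∧ (∀ x, 0 ≤ f x) ∧
            Measure.map (fun q : ℝ × ℝ => q.1 + q.2) (ν.prod (expLaw μ))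
              = volume.withDensity (fun x => ENNReal.ofReal (f x)) ∧
            h = -(∫ x, f x * Real.log (f x)) }
        = Real.log ((Real.exp 1 + μ * τ) / μ) := by
  constructor
  · set ν := P.map T
    have : IsProbabilityMeasure ν := Measure.isProbabilityMeasure_map hT.aemeasurable
    have hν : ∀ᵐ t ∂ν, t ∈ Icc 0 τ :=
      (ae_map_iff hT.aemeasurable measurableSet_Icc).2 (ae_of_all _ hTsupp)
    have hlaw : P.map (fun ω => T ω + D ω) = ν ∗ expLaw μ :=
      hDlaw ▸ hindep.map_add_eq_map_conv_map hT hD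
    exact ⟨expConvDensity μ ν, measurable_expConvDensity ν, expConvDensity_nonneg ν hμ,
      hlaw.trans (conv_expLaw ν hμ), neg_integral_mul_log_le_of_conv_expLaw hμ hτ.le ν hν
        (measurable_expConvDensity ν) (expConvDensity_nonneg ν hμ) (conv_expLaw ν hμ)⟩
  · have := isProbabilityMeasure_maxEntLaw hμ hτ.le
    have hq := expConvDensity_maxEntLaw hμ hτ.le
    obtain ⟨hint, hmass⟩ := integrable_and_integral_maxEntDensity hμ hτ.le
    refine IsGreatest.csSup_eq ⟨⟨maxEntLaw μ τ, this, mem_ae_iff.1 (ae_mem_Icc_maxEntLaw hτ.le),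
      maxEntDensity μ τ, hq ▸ measurable_expConvDensity _, hq ▸ expConvDensity_nonneg _ hμ,
      hq ▸ conv_expLaw _ hμ, ?_⟩, ?_⟩
    · rw [(integrable_and_integral_mul_log_maxEntDensity hμ hτ.le hint hmass
        (fun s hs => maxEntDensity_of_neg hs) fun s hs => maxEntDensity_of_le hτ.le hs).2,
        neg_log_maxEntPlateau]
    · rintro h ⟨ν, hν, hsupp, f, hfm, hf0, hlaw, rfl⟩
      exact neg_integral_mul_log_le_of_conv_expLaw hμ hτ.le ν (mem_ae_iff.2 hsupp) hfm hf0 hlaw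
end

section
/- Let M ≥ 1, let g be a first-passage density (probability density on ℝ vanishing on (−∞,0)), and fix launch times t ∈ ℝ^M. Let f_t(s) = ∏_{m=1}^M g(s_m − t_m) be the conditional density of the unordered arrivals, let F_t(s) = ∑_{π ∈ S_M} f_t(s ∘ π) for s in the ordered chamber C = {s₁ < ⋯ < s_M} be the conditional density of the sorted arrivals, and for s ∈ C with F_t(s) > 0 let p_t(π | s) = f_t(s ∘ π)/F_t(s) be the conditional permutation distribution. Then, assuming all three integrals are finite, −∫_{ℝ^M} f_t log f_t = −∫_C F_t log F_t + ∫_C F_t(s) · H(p_t(·|s)) ds, where H denotes Shannon entropy; that is, h(S | T = t) = h(S⃗ | T = t) + H(Ω | S⃗, T = t). (Paper Theorem 'The Ordering Entropy H(Ω|S⃗,T)' in conditional form.) -/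
/-!
Almost every point of `ℝ^M` has pairwise distinct coordinates, so up to a null set `ℝ^M` is the
disjoint union of the chambers `{y | y ∘ σ⁻¹ ∈ C}`, each the image of `C` under the
volume-preserving map `x ↦ x ∘ σ`. Hence `∫ f log f = ∑_π ∫_C f(s ∘ π) log f(s ∘ π)`.
Pointwise on `C`, the grouping rule for Shannon entropy, `−∑ q log q = −Z log Z + Z · H(q / Z)`
with `Z = ∑ q`, applied to `q_π = f(s ∘ π)`, identifies this integrand with the one on the
right-hand side.
-/

open MeasureTheory

namespace Real

theorem sum_negMulLog_eq_negMulLog_sum_add_mul_sum_negMulLog_div {ι : Type*} [Fintype ι]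
    {q : ι → ℝ} (hq : ∀ i, 0 ≤ q i) :
    ∑ i, negMulLog (q i) = negMulLog (∑ i, q i) + (∑ i, q i) * ∑ i, negMulLog (q i / ∑ j, q j) := by
  rcases (Finset.sum_nonneg fun i _ => hq i : 0 ≤ ∑ i, q i).eq_or_lt with hZ | hZ
  · obtain rfl : q = 0 := (Fintype.sum_eq_zero_iff_of_nonneg hq).1 hZ.symm
    simp
  · set Z := ∑ i, q i
    calc ∑ i, negMulLog (q i) = ∑ i, negMulLog (q i / Z * Z) := by
          simp only [div_mul_cancel₀ _ hZ.ne']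
      _ = ∑ i, (Z * negMulLog (q i / Z) + q i / Z * negMulLog Z) := by
          simp only [negMulLog_mul]
      _ = negMulLog Z + Z * ∑ i, negMulLog (q i / Z) := by
          rw [Finset.sum_add_distrib, ← Finset.mul_sum, ← Finset.sum_mul, ← Finset.sum_div,
            div_self hZ.ne', one_mul, add_comm]

end Real

namespace MeasurableEquiv

variable {ι α : Type*} [MeasurableSpace α]

def compPerm (σ : Equiv.Perm ι) : (ι → α) ≃ᵐ (ι → α) :=
  (piCongrLeft (fun _ => α) σ).symm

@[simp]
theorem compPerm_apply (σ : Equiv.Perm ι) (x : ι → α) : compPerm σ x = x ∘ σ :=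
  rfl

@[simp]
theorem compPerm_symm_apply (σ : Equiv.Perm ι) (x : ι → α) : (compPerm σ).symm x = x ∘ σ.symm :=
  (symm_apply_eq _).2 <| by ext i; simp

theorem measurePreserving_compPerm {ι α : Type*} [Fintype ι] [MeasureSpace α]
    [SigmaFinite (volume : Measure α)] (σ : Equiv.Perm ι) :
    MeasurePreserving (compPerm (α := α) σ) volume volume :=
  (volume_measurePreserving_piCongrLeft (fun _ => α) σ).symm _

end MeasurableEquiv

open MeasurableEquiv Function

theorem measurableSet_setOf_strictMono_s12 {ι α : Type*} [Countable ι] [Preorder ι]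
    [TopologicalSpace α] [LinearOrder α] [OrderClosedTopology α] [SecondCountableTopology α]
    [MeasurableSpace α] [OpensMeasurableSpace α] :
    MeasurableSet {y : ι → α | StrictMono y} := by
  simp only [StrictMono, Set.ofPred_forall]
  exact .iInter fun i => .iInter fun j => .iInter fun _ =>
    measurableSet_lt (measurable_pi_apply i) (measurable_pi_apply j)

theorem pairwise_disjoint_setOf_strictMono_comp {α : Type*} [PartialOrder α] {n : ℕ} :
    Pairwise (Disjoint on fun σ : Equiv.Perm (Fin n) => {y : Fin n → α | StrictMono (y ∘ σ)}) := by
  intro σ τ hστ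
  refine Set.disjoint_left.2 fun y (hσ : StrictMono (y ∘ σ)) (hτ : StrictMono (y ∘ τ)) => hστ ?_
  have hy : Injective y := by
    simpa [Function.comp_assoc] using hσ.injective.comp σ.symm.injective
  exact Equiv.ext fun i => hy (congrFun (Tuple.unique_monotone hσ.monotone hτ.monotone) i)

theorem Function.Injective.exists_strictMono_comp_perm {α : Type*} [LinearOrder α] {n : ℕ}
    {y : Fin n → α} (hy : Injective y) : ∃ σ : Equiv.Perm (Fin n), StrictMono (y ∘ σ) :=
  ⟨Tuple.sort y, (Tuple.monotone_sort y).strictMono_of_injective (hy.comp (Tuple.sort y).injective)⟩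

theorem volume_setOf_apply_eq_apply {ι : Type*} [Fintype ι] {i j : ι} (hij : i ≠ j) :
    volume {y : ι → ℝ | y i = y j} = 0 := by
  classical
  let L : (ι → ℝ) →ₗ[ℝ] ℝ := (LinearMap.proj i : (ι → ℝ) →ₗ[ℝ] ℝ) - LinearMap.proj j
  have hL : {y : ι → ℝ | y i = y j} = (LinearMap.ker L : Set (ι → ℝ)) := by
    ext y
    simp [L, sub_eq_zero]
  rw [hL]
  refine Measure.addHaar_submodule _ _ fun h => ?_
  have hmem : (Pi.single i 1 : ι → ℝ) ∈ LinearMap.ker L := h ▸ Submodule.mem_top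
  simp [L, Pi.single_eq_of_ne hij.symm] at hmem

theorem ae_injective {ι : Type*} [Fintype ι] : ∀ᵐ y : ι → ℝ, Injective y := by
  have hpair : ∀ i j : ι, ∀ᵐ y : ι → ℝ, i ≠ j → y i ≠ y j := by
    intro i j
    rcases eq_or_ne i j with rfl | hij
    · exact .of_forall fun _ h => absurd rfl h
    · filter_upwards [measure_eq_zero_iff_ae_notMem.1 (volume_setOf_apply_eq_apply hij)]
        with y hy _ using hy
  filter_upwards [ae_all_iff.2 fun i => ae_all_iff.2 (hpair i)] with y hy a b
  exact not_imp_not.1 (hy a b)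

theorem integral_eq_sum_perm_setIntegral_strictMono {E : Type*} [NormedAddCommGroup E]
    [NormedSpace ℝ E] {n : ℕ} {φ : (Fin n → ℝ) → E} (hφ : Integrable φ) :
    ∫ x, φ x = ∑ σ : Equiv.Perm (Fin n), ∫ x in {y | StrictMono y}, φ (x ∘ σ) := by
  set C := {y : Fin n → ℝ | StrictMono y}
  set chamber := fun σ : Equiv.Perm (Fin n) => {y : Fin n → ℝ | StrictMono (y ∘ σ.symm)}
  have hchamber : ∀ σ, chamber σ = compPerm σ '' C := fun σ => by
    rw [image_eq_preimage_symm]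
    ext y
    simp [chamber, C]
  have hcover : ∀ᵐ y : Fin n → ℝ, y ∈ ⋃ σ, chamber σ := by
    filter_upwards [ae_injective] with y hy
    obtain ⟨σ, hσ⟩ := hy.exists_strictMono_comp_perm
    exact Set.mem_iUnion.2 ⟨σ.symm, hσ⟩
  have hdisj : Pairwise (Disjoint on chamber) :=
    pairwise_disjoint_setOf_strictMono_comp.comp_of_injective Equiv.symm_bijective.injective
  calc ∫ x, φ x = ∫ x in ⋃ σ, chamber σ, φ x := by
        rw [← setIntegral_univ]
        exact setIntegral_congr_set (Filter.eventuallyEq_univ.2 hcover).symm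
    _ = ∑ σ, ∫ x in chamber σ, φ x :=
        integral_iUnion_fintype (fun σ => hchamber σ ▸ (compPerm σ).measurableSet_image.2
          measurableSet_setOf_strictMono_s12) hdisj fun _ => hφ.integrableOn
    _ = ∑ σ : Equiv.Perm (Fin n), ∫ x in C, φ (x ∘ σ) := by
        refine Finset.sum_congr rfl fun σ _ => ?_
        rw [hchamber, (measurePreserving_compPerm σ).setIntegral_image_emb
          (compPerm σ).measurableEmbedding]
        simp

theorem conditional_ordering_entropy_decomposition_general {M : ℕ}
    (g : ℝ → ℝ) (hg0 : ∀ x, 0 ≤ g x)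
    (t : Fin M → ℝ)
    (f : (Fin M → ℝ) → ℝ) (hf : ∀ s, f s = ∏ m, g (s m - t m))
    (F : (Fin M → ℝ) → ℝ) (hF : ∀ s, F s = ∑ π : Equiv.Perm (Fin M), f (s ∘ π))
    (p : Equiv.Perm (Fin M) → (Fin M → ℝ) → ℝ)
    (hp : ∀ π s, p π s = f (s ∘ π) / F s)
    (H : (Fin M → ℝ) → ℝ)
    (hH : ∀ s, H s = -∑ π : Equiv.Perm (Fin M), p π s * Real.log (p π s))
    (C : Set (Fin M → ℝ)) (hC : C = {s : Fin M → ℝ | StrictMono s})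
    (h1 : Integrable (fun s => f s * Real.log (f s)))
    (h2 : IntegrableOn (fun s => F s * Real.log (F s)) C) :
    -(∫ s, f s * Real.log (f s))
      = -(∫ s in C, F s * Real.log (F s)) + ∫ s in C, F s * H s := by
  have hfnn : ∀ s, 0 ≤ f s := fun s => hf s ▸ Finset.prod_nonneg fun m _ => hg0 _
  have hFH : ∀ s, F s * H s
      = F s * Real.log (F s) - ∑ π : Equiv.Perm (Fin M), f (s ∘ π) * Real.log (f (s ∘ π)) := by
    intro s
    have hgroup := Real.sum_negMulLog_eq_negMulLog_sum_add_mul_sum_negMulLog_div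
      fun π : Equiv.Perm (Fin M) => hfnn (s ∘ π)
    rw [← hF s] at hgroup
    simp only [Real.negMulLog, neg_mul, Finset.sum_neg_distrib] at hgroup
    simp only [hH, hp]
    linarith
  have hint : ∀ π : Equiv.Perm (Fin M),
      IntegrableOn (fun s => f (s ∘ π) * Real.log (f (s ∘ π))) C := fun π =>
    (((measurePreserving_compPerm π).integrable_comp_emb
      (compPerm π).measurableEmbedding).2 h1).integrableOn
  calc -(∫ s, f s * Real.log (f s))
      = -∑ π : Equiv.Perm (Fin M), ∫ s in C, f (s ∘ π) * Real.log (f (s ∘ π)) := by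
        rw [hC, integral_eq_sum_perm_setIntegral_strictMono h1]
    _ = -(∫ s in C, F s * Real.log (F s)) + ∫ s in C, F s * H s := by
        simp_rw [hFH]
        rw [integral_sub h2 (integrable_finsetSum _ fun π _ => hint π),
          integral_finsetSum _ fun π _ => hint π]
        ring

/-- **The ordering entropy, conditionally on the launch times** (`h(S|T=t) =
h(S⃗|T=t) + H(Ω|S⃗,T=t)`).  For a causal first-passage density `g` and launch times
`t`, let `f(s) = ∏_m g(s_m − t_m)` be the density of the unordered arrivals,
`F(s) = ∑_π f(s ∘ π)` the density of the sorted arrivals on the ordered chamber `C`,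
and `H(s)` the Shannon entropy of the conditional permutation distribution
`p(π|s) = f(s∘π)/F(s)`.  If all three integrals are finite, then
`−∫ f log f = −∫_C F log F + ∫_C F·H`. -/
theorem conditional_ordering_entropy_decomposition {M : ℕ} (hM : 1 ≤ M)
    (g : ℝ → ℝ) (hgmeas : Measurable g) (hg0 : ∀ x, 0 ≤ g x)
    (hgcausal : ∀ x < (0 : ℝ), g x = 0) (hgdens : ∫ x, g x = 1)
    (t : Fin M → ℝ)
    (f : (Fin M → ℝ) → ℝ) (hf : ∀ s, f s = ∏ m, g (s m - t m))
    (F : (Fin M → ℝ) → ℝ) (hF : ∀ s, F s = ∑ π : Equiv.Perm (Fin M), f (s ∘ π))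
    (p : Equiv.Perm (Fin M) → (Fin M → ℝ) → ℝ)
    (hp : ∀ π s, p π s = f (s ∘ π) / F s)
    (H : (Fin M → ℝ) → ℝ)
    (hH : ∀ s, H s = -∑ π : Equiv.Perm (Fin M), p π s * Real.log (p π s))
    (C : Set (Fin M → ℝ)) (hC : C = {s : Fin M → ℝ | StrictMono s})
    (h1 : Integrable (fun s => f s * Real.log (f s)))
    (h2 : IntegrableOn (fun s => F s * Real.log (F s)) C)
    (h3 : IntegrableOn (fun s => F s * H s) C) :
    -(∫ s, f s * Real.log (f s))
      = -(∫ s in C, F s * Real.log (F s)) + ∫ s in C, F s * H s :=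
  conditional_ordering_entropy_decomposition_general g hg0 t f hf F hF p hp H hH C hC h1 h2
end
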